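/- (Generalized Švarc–Milnor with converse.) Let (X,d) be a coarsely connected metric space and let G be a finitely generated group with word metric d_S for some finite symmetric generating set S. Then X admits a proper, cobounded coarse near-action by G if and only if (X,d) is coarsely equivalent to (G,d_S), i.e. there exists a coarse equivalence f : (G,d_S) → (X,d). -/

import Mathlib

open Metric Filter

/-- Nondecreasing control functions `[0,∞) → [0,∞)` with `ρ₋(r) → ∞` as `r → ∞`. -/
def ControlFns (rm rp : ℝ → ℝ) : Prop :=
  MonotoneOn rm (Set.Ici 0) ∧ MonotoneOn rp (Set.Ici 0) ∧
  (∀ r, 0 ≤ r → 0 ≤ rm r) ∧ (∀ r, 0 ≤ r → 0 ≤ rp r) ∧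
  Tendsto rm atTop atTop

/-- `f` is a `(ρ₋,ρ₊)`-coarse embedding. -/
def IsCoarseEmbeddingWith {X Y : Type*} [MetricSpace X] [MetricSpace Y]
    (rm rp : ℝ → ℝ) (f : X → Y) : Prop :=
  ∀ x₁ x₂ : X, rm (dist x₁ x₂) ≤ dist (f x₁) (f x₂) ∧
    dist (f x₁) (f x₂) ≤ rp (dist x₁ x₂)

/-- A `C`-near-action of a group `G` on a metric space `X`. -/
def IsCNearAction {G X : Type*} [Group G] [MetricSpace X] (C : ℝ) (ψ : G → X → X) : Prop :=
  (∀ x : X, dist (ψ 1 x) x ≤ C) ∧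
  ∀ (γ₁ γ₂ : G) (x : X), dist (ψ (γ₁ * γ₂) x) (ψ γ₁ (ψ γ₂ x)) ≤ C

/-- A `(ρ₋,ρ₊,C)`-coarse near-action: a `C`-near-action in which every `ψ γ` is a
`(ρ₋,ρ₊)`-coarse embedding. -/
def IsCoarseNearAction {G X : Type*} [Group G] [MetricSpace X]
    (rm rp : ℝ → ℝ) (C : ℝ) (ψ : G → X → X) : Prop :=
  ControlFns rm rp ∧ 0 ≤ C ∧ IsCNearAction C ψ ∧
    ∀ γ : G, IsCoarseEmbeddingWith rm rp (ψ γ)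

/-- The near-action `ψ` is cobounded. -/
def IsCoboundedNearAction {G X : Type*} [Group G] [MetricSpace X] (ψ : G → X → X) : Prop :=
  ∃ (x₀ : X) (R : ℝ), 0 < R ∧ ∀ y : X, ∃ γ : G, dist (ψ γ x₀) y < R

/-- The near-action `ψ` is proper. -/
def IsProperNearAction {G X : Type*} [Group G] [MetricSpace X] (ψ : G → X → X) : Prop :=
  ∀ R : ℝ, 0 < R → ∃ M : ℕ, ∀ x y : X,
    {γ : G | ∃ z ∈ closedBall x R, ψ γ z ∈ closedBall y R}.encard ≤ (M : ℕ∞)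

/-- `X` is coarsely connected: some `R > 0` joins any two points by an `R`-chain. -/
def IsCoarselyConnected (X : Type*) [MetricSpace X] : Prop :=
  ∃ R : ℝ, 0 < R ∧ ∀ x x' : X, ∃ (n : ℕ) (c : ℕ → X), c 0 = x ∧ c n = x' ∧
    ∀ i < n, dist (c i) (c (i + 1)) ≤ R

/-- The word metric on `G` determined by a generating set `S`:
`wordDist S g h` is the least `n` such that `g⁻¹ * h` is a product of `n` elements of `S`. -/
noncomputable def wordDist {G : Type*} [Group G] (S : Set G) (g h : G) : ℝ :=
  ((sInf {n : ℕ | ∃ l : List G, l.length = n ∧ (∀ x ∈ l, x ∈ S) ∧ l.prod = g⁻¹ * h} : ℕ) : ℝ)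

/-- A coarse equivalence from `(A, dA)` to `(B, dB)`: a coarse embedding that is
`C`-surjective for some `C ≥ 0`. -/
def IsCoarseEquivPair {A B : Type*} (dA : A → A → ℝ) (dB : B → B → ℝ) (f : A → B) : Prop :=
  (∃ rm rp : ℝ → ℝ, ControlFns rm rp ∧
    ∀ a₁ a₂ : A, rm (dA a₁ a₂) ≤ dB (f a₁) (f a₂) ∧
      dB (f a₁) (f a₂) ≤ rp (dA a₁ a₂)) ∧
  ∃ C : ℝ, 0 ≤ C ∧ ∀ b : B, ∃ a : A, dB b (f a) ≤ C


/-!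
A map is a coarse embedding exactly when bounded distances in the source force bounded distances
in the target and vice versa; control functions can then be built from these bounds alone.
For a proper cobounded near-action `ψ`, the orbit map `γ ↦ ψ γ x₀` is Lipschitz for the word
metric because each generator moves `x₀` a bounded amount; properness makes the elements moving
`x₀` a bounded distance finitely many, hence word-bounded; coboundedness is coarse surjectivity.
Conversely, a coarse equivalence `f` with quasi-inverse `g` transports the left translation
action of `G` on itself to the near-action `γ x ↦ f (γ * g x)`, which is proper because balls
of the word metric are finite.
-/

def Controls {P : Type*} (u v : P → ℝ) : Prop :=
  ∀ r : ℝ, ∃ N : ℝ, ∀ p, u p ≤ r → v p ≤ N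

section Controls

variable {P : Type*} {u v : P → ℝ}

lemma exists_lower_control (hv : ∀ p, 0 ≤ v p) (hvu : Controls v u) :
    ∃ rm : ℝ → ℝ, Monotone rm ∧ (∀ r, 0 ≤ r → 0 ≤ rm r) ∧ Tendsto rm atTop atTop ∧
      ∀ p, rm (u p) ≤ v p := by
  -- `rm t` is the infimum of `v` over `{u ≥ t}`, capped by `t` so that it is still finite and
  -- tends to `∞` when that set is empty.
  set A : ℝ → Set ℝ := fun t => insert t (v '' {p | t ≤ u p})
  have hA : ∀ t, BddBelow (A t) := fun t => ⟨min t 0, by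
    rintro s (rfl | ⟨p, -, rfl⟩)
    exacts [min_le_left _ _, (min_le_right _ _).trans (hv p)]⟩
  refine ⟨fun t => sInf (A t), fun t t' htt' => ?_, fun r hr => ?_, ?_, fun p => ?_⟩
  · refine le_csInf (Set.insert_nonempty _ _) ?_
    rintro s (rfl | ⟨p, hp, rfl⟩)
    exacts [(csInf_le (hA t) (Set.mem_insert _ _)).trans htt',
      csInf_le (hA t) (Set.mem_insert_of_mem _ ⟨p, htt'.trans hp, rfl⟩)]
  · refine le_csInf (Set.insert_nonempty _ _) ?_
    rintro s (rfl | ⟨p, -, rfl⟩)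
    exacts [hr, hv p]
  · refine tendsto_atTop.2 fun b => ?_
    obtain ⟨N, hN⟩ := hvu b
    filter_upwards [eventually_gt_atTop (max N b)] with t ht
    refine le_csInf (Set.insert_nonempty _ _) ?_
    rintro s (rfl | ⟨p, hp : t ≤ u p, rfl⟩)
    · exact (le_max_right _ _).trans ht.le
    · by_contra! hpb
      linarith [hN p hpb.le, le_max_left N b]
  · exact csInf_le (hA _) (Set.mem_insert_of_mem _ ⟨p, show u p ≤ u p from le_rfl, rfl⟩)

lemma exists_upper_control (huv : Controls u v) :
    ∃ rp : ℝ → ℝ, Monotone rp ∧ (∀ r, 0 ≤ rp r) ∧ ∀ p, v p ≤ rp (u p) := by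
  choose N hN using huv
  set H : ℕ → ℝ := fun k => max (N k) 0
  refine ⟨fun t => (Finset.range (⌈t⌉₊ + 1)).sup' Finset.nonempty_range_add_one H,
    fun t t' htt' => ?_, fun r => ?_, fun p => ?_⟩
  · exact Finset.sup'_mono _ (Finset.range_subset_range.2 (by gcongr)) _
  · exact (le_max_right _ _).trans (Finset.le_sup' H (Finset.mem_range.2 (Nat.succ_pos _)))
  · exact (hN _ p (Nat.le_ceil _)).trans <| (le_max_left _ _).trans <|
      Finset.le_sup' H (Finset.self_mem_range_succ _)

lemma exists_controlFns_of_controls (hv : ∀ p, 0 ≤ v p) (huv : Controls u v)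
    (hvu : Controls v u) :
    ∃ rm rp : ℝ → ℝ, ControlFns rm rp ∧ ∀ p, rm (u p) ≤ v p ∧ v p ≤ rp (u p) := by
  obtain ⟨rm, hrm, hrm0, hrmT, hrmu⟩ := exists_lower_control hv hvu
  obtain ⟨rp, hrp, hrp0, hrpu⟩ := exists_upper_control huv
  exact ⟨rm, rp, ⟨hrm.monotoneOn _, hrp.monotoneOn _, hrm0, fun r _ => hrp0 r, hrmT⟩,
    fun p => ⟨hrmu p, hrpu p⟩⟩

lemma ControlFns.controls {rm rp : ℝ → ℝ} (hc : ControlFns rm rp) (hu : ∀ p, 0 ≤ u p)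
    (h : ∀ p, rm (u p) ≤ v p ∧ v p ≤ rp (u p)) : Controls u v ∧ Controls v u := by
  obtain ⟨-, hrp, -, -, hrmT⟩ := hc
  refine ⟨fun r => ⟨rp (max r 0), fun p hp => (h p).2.trans ?_⟩, fun r => ?_⟩
  · exact hrp (hu p) (le_max_right r 0) (hp.trans (le_max_left r 0))
  · obtain ⟨W, hW⟩ := eventually_atTop.1 (tendsto_atTop.1 hrmT (r + 1))
    refine ⟨W, fun p hp => ?_⟩
    by_contra! hWp
    linarith [hW _ hWp.le, (h p).1]

end Controls

section WordMetric

variable {G : Type*} [Group G] {S : Set G}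

lemma wordDist_nonneg (S : Set G) (g h : G) : 0 ≤ wordDist S g h := Nat.cast_nonneg _

lemma wordDist_mul_left (S : Set G) (γ g h : G) : wordDist S (γ * g) (γ * h) = wordDist S g h := by
  simp only [wordDist, mul_inv_rev, mul_assoc, inv_mul_cancel_left]

lemma wordDist_one_inv_mul (S : Set G) (g h : G) : wordDist S 1 (g⁻¹ * h) = wordDist S g h := by
  simp only [wordDist, inv_one, one_mul]

lemma exists_list_prod_eq (hSsymm : ∀ s ∈ S, s⁻¹ ∈ S) (hSgen : Subgroup.closure S = ⊤)
    (g : G) : ∃ l : List G, (∀ x ∈ l, x ∈ S) ∧ l.prod = g := by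
  have hg : g ∈ Submonoid.closure (S ∪ S⁻¹) := by
    rw [← Subgroup.closure_toSubmonoid, hSgen]
    trivial
  obtain ⟨l, hl, rfl⟩ := Submonoid.exists_list_of_mem_closure hg
  refine ⟨l, fun x hx => ?_, rfl⟩
  rcases hl x hx with hxS | hxS
  exacts [hxS, inv_inv x ▸ hSsymm _ hxS]

lemma exists_list_length_eq_wordDist (hSsymm : ∀ s ∈ S, s⁻¹ ∈ S)
    (hSgen : Subgroup.closure S = ⊤) (g h : G) :
    ∃ l : List G, (∀ x ∈ l, x ∈ S) ∧ l.prod = g⁻¹ * h ∧ (l.length : ℝ) = wordDist S g h := by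
  obtain ⟨l, hl, hprod⟩ := exists_list_prod_eq hSsymm hSgen (g⁻¹ * h)
  have hne : {n : ℕ | ∃ l : List G, l.length = n ∧ (∀ x ∈ l, x ∈ S) ∧ l.prod = g⁻¹ * h}.Nonempty :=
    ⟨l.length, l, rfl, hl, hprod⟩
  obtain ⟨l', hlen, hl', hprod'⟩ := Nat.sInf_mem hne
  exact ⟨l', hl', hprod', congrArg _ hlen⟩

lemma finite_setOf_wordDist_one_le (hSfin : S.Finite) (hSsymm : ∀ s ∈ S, s⁻¹ ∈ S)
    (hSgen : Subgroup.closure S = ⊤) (T : ℝ) : {g : G | wordDist S 1 g ≤ T}.Finite := by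
  have : Finite S := hSfin
  refine ((List.finite_length_le S ⌈T⌉₊).image fun l => (l.map (↑)).prod).subset ?_
  intro g hg
  obtain ⟨l, hl, hprod, hlen⟩ := exists_list_length_eq_wordDist hSsymm hSgen 1 g
  lift l to List S using hl
  refine ⟨l, ?_, by simpa using hprod⟩
  have : (l.length : ℝ) ≤ T := by simpa [← hlen] using hg
  exact_mod_cast this.trans (Nat.le_ceil T)

lemma encard_setOf_wordDist_mul_le (a b : G) (W : ℝ) :
    {γ | wordDist S (γ * a) b ≤ W}.encard ≤ {w | wordDist S 1 w ≤ W}.encard := by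
  calc {γ | wordDist S (γ * a) b ≤ W}.encard
      ≤ ((fun w => b * w⁻¹ * a⁻¹) '' {w | wordDist S 1 w ≤ W}).encard := by
        refine Set.encard_le_encard fun γ hγ => ⟨(γ * a)⁻¹ * b, ?_, by group⟩
        rwa [Set.mem_ofPred_eq, wordDist_one_inv_mul]
    _ ≤ _ := Set.encard_image_le _ _

lemma dist_le_mul_wordDist {Y : Type*} [PseudoMetricSpace Y] (hSsymm : ∀ s ∈ S, s⁻¹ ∈ S)
    (hSgen : Subgroup.closure S = ⊤) {F : G → Y} {A : ℝ}
    (hF : ∀ γ, ∀ s ∈ S, dist (F (γ * s)) (F γ) ≤ A) (γ γ' : G) :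
    dist (F γ) (F γ') ≤ A * wordDist S γ γ' := by
  have key : ∀ l : List G, (∀ x ∈ l, x ∈ S) → ∀ γ, dist (F (γ * l.prod)) (F γ) ≤ A * l.length := by
    intro l
    induction l with
    | nil => simp
    | cons s t ih =>
      intro hl γ
      rw [List.prod_cons, ← mul_assoc, List.length_cons, Nat.cast_succ]
      calc dist (F (γ * s * t.prod)) (F γ)
          ≤ dist (F (γ * s * t.prod)) (F (γ * s)) + dist (F (γ * s)) (F γ) := dist_triangle _ _ _
        _ ≤ A * t.length + A :=
          add_le_add (ih (fun x hx => hl x (List.mem_cons_of_mem s hx)) _)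
            (hF γ s (hl s List.mem_cons_self))
        _ = A * (t.length + 1) := by ring
  obtain ⟨l, hl, hprod, hlen⟩ := exists_list_length_eq_wordDist hSsymm hSgen γ γ'
  rw [dist_comm, ← hlen]
  simpa [hprod] using key l hl γ

end WordMetric

section NearAction

variable {G X : Type*} [Group G] [MetricSpace X] {ψ : G → X → X}

lemma IsProperNearAction.finite_setOf_dist_le (h : IsProperNearAction ψ) (x : X) (R : ℝ) :
    {γ | dist (ψ γ x) x ≤ R}.Finite := by
  obtain ⟨M, hM⟩ := h (max R 1) (by positivity)
  refine Set.finite_of_encard_le_coe ((Set.encard_le_encard fun γ hγ => ?_).trans (hM x x))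
  exact ⟨x, mem_closedBall_self (by positivity),
    mem_closedBall.2 (le_trans hγ (le_max_left _ _))⟩

variable {rm rp : ℝ → ℝ} {C : ℝ}

lemma IsCoarseNearAction.dist_mul_apply_le (hψ : IsCoarseNearAction rm rp C ψ) (γ δ : G) (x : X) :
    dist (ψ (γ * δ) x) (ψ γ x) ≤ C + rp (dist (ψ δ x) x) :=
  (dist_triangle _ (ψ γ (ψ δ x)) _).trans (add_le_add (hψ.2.2.1.2 γ δ x) (hψ.2.2.2 γ _ _).2)

lemma IsCoarseNearAction.le_dist_mul_apply (hψ : IsCoarseNearAction rm rp C ψ) (γ δ : G) (x : X) :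
    rm (dist (ψ δ x) x) ≤ C + dist (ψ (γ * δ) x) (ψ γ x) := by
  calc rm (dist (ψ δ x) x) ≤ dist (ψ γ (ψ δ x)) (ψ γ x) := (hψ.2.2.2 γ _ _).1
    _ ≤ dist (ψ γ (ψ δ x)) (ψ (γ * δ) x) + dist (ψ (γ * δ) x) (ψ γ x) := dist_triangle _ _ _
    _ ≤ C + dist (ψ (γ * δ) x) (ψ γ x) := by
      rw [dist_comm]
      linarith [hψ.2.2.1.2 γ δ x]

lemma IsCoarseNearAction.controls_wordDist_orbit (hψ : IsCoarseNearAction rm rp C ψ)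
    {S : Set G} (hSfin : S.Finite) (hSsymm : ∀ s ∈ S, s⁻¹ ∈ S)
    (hSgen : Subgroup.closure S = ⊤) (x₀ : X) :
    Controls (fun p : G × G => wordDist S p.1 p.2) (fun p => dist (ψ p.1 x₀) (ψ p.2 x₀)) := by
  obtain ⟨K, hK⟩ := (hSfin.image fun s => rp (dist (ψ s x₀) x₀)).bddAbove
  have hlip := dist_le_mul_wordDist hSsymm hSgen (F := fun γ => ψ γ x₀) (A := max (C + K) 0)
    fun γ s hs => (hψ.dist_mul_apply_le γ s x₀).trans <|
      (add_le_add_right (hK ⟨s, hs, rfl⟩) C).trans (le_max_left _ _)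
  exact fun r => ⟨max (C + K) 0 * r, fun p hp =>
    (hlip p.1 p.2).trans (mul_le_mul_of_nonneg_left hp (le_max_right _ _))⟩

lemma IsCoarseNearAction.controls_orbit_wordDist (hψ : IsCoarseNearAction rm rp C ψ)
    (hproper : IsProperNearAction ψ) (S : Set G) (x₀ : X) :
    Controls (fun p : G × G => dist (ψ p.1 x₀) (ψ p.2 x₀)) (fun p => wordDist S p.1 p.2) := by
  intro r
  obtain ⟨T, hT⟩ := eventually_atTop.1 (tendsto_atTop.1 hψ.1.2.2.2.2 (C + r + 1))
  obtain ⟨N, hN⟩ :=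
    ((hproper.finite_setOf_dist_le x₀ T).image fun δ => wordDist S 1 δ).bddAbove
  refine ⟨N, fun ⟨γ, γ'⟩ hp => ?_⟩
  show wordDist S γ γ' ≤ N
  rw [← wordDist_one_inv_mul]
  refine hN ⟨_, show dist (ψ (γ⁻¹ * γ') x₀) x₀ ≤ T from ?_, rfl⟩
  by_contra! hT'
  have hlow := hψ.le_dist_mul_apply γ (γ⁻¹ * γ') x₀
  rw [mul_inv_cancel_left, dist_comm (ψ γ' x₀)] at hlow
  linarith [hT _ hT'.le, show dist (ψ γ x₀) (ψ γ' x₀) ≤ r from hp]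

theorem IsCoarseNearAction.exists_isCoarseEquivPair (hψ : IsCoarseNearAction rm rp C ψ)
    (hproper : IsProperNearAction ψ) (hcob : IsCoboundedNearAction ψ) {S : Set G}
    (hSfin : S.Finite) (hSsymm : ∀ s ∈ S, s⁻¹ ∈ S) (hSgen : Subgroup.closure S = ⊤) :
    ∃ f : G → X, IsCoarseEquivPair (wordDist S) dist f := by
  obtain ⟨x₀, R, hR, hcob⟩ := hcob
  obtain ⟨rm', rp', hc, h⟩ := exists_controlFns_of_controls (fun _ => dist_nonneg)
    (hψ.controls_wordDist_orbit hSfin hSsymm hSgen x₀) (hψ.controls_orbit_wordDist hproper S x₀)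
  refine ⟨fun γ => ψ γ x₀, ⟨rm', rp', hc, fun a b => h (a, b)⟩, R, hR.le, fun y => ?_⟩
  obtain ⟨γ, hγ⟩ := hcob y
  exact ⟨γ, (dist_comm y _).trans_le hγ.le⟩

end NearAction

lemma abs_dist_sub_dist_le_of_dist_le {X : Type*} [PseudoMetricSpace X] {φ : X → X} {C : ℝ}
    (hφ : ∀ x, dist x (φ x) ≤ C) (x x' : X) : |dist (φ x) (φ x') - dist x x'| ≤ 2 * C := by
  have := dist_dist_dist_le (φ x) (φ x') x x'
  rw [Real.dist_eq, dist_comm (φ x) x, dist_comm (φ x') x'] at this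
  linarith [hφ x, hφ x']

def transferNearAction {G X : Type*} [Group G] (f : G → X) (g : X → G) : G → X → X :=
  fun γ x => f (γ * g x)

section Transfer

variable {G X : Type*} [Group G] [MetricSpace X] {S : Set G} {f : G → X} {g : X → G} {C₀ : ℝ}

lemma exists_forall_dist_mul_le
    (hed : Controls (fun p : G × G => wordDist S p.1 p.2) (fun p => dist (f p.1) (f p.2)))
    (hde : Controls (fun p : G × G => dist (f p.1) (f p.2)) (fun p => wordDist S p.1 p.2))
    (r : ℝ) : ∃ N, ∀ a b γ : G, dist (f a) (f b) ≤ r → dist (f (γ * a)) (f (γ * b)) ≤ N := by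
  obtain ⟨W, hW⟩ := hde r
  obtain ⟨N, hN⟩ := hed W
  exact ⟨N, fun a b γ h => hN (γ * a, γ * b) <| (wordDist_mul_left S γ a b).trans_le (hW (a, b) h)⟩

lemma isCoarseNearAction_transferNearAction
    (hed : Controls (fun p : G × G => wordDist S p.1 p.2) (fun p => dist (f p.1) (f p.2)))
    (hde : Controls (fun p : G × G => dist (f p.1) (f p.2)) (fun p => wordDist S p.1 p.2))
    (hC₀ : 0 ≤ C₀) (hg : ∀ x, dist x (f (g x)) ≤ C₀) :
    ∃ rm rp C, IsCoarseNearAction rm rp C (transferNearAction f g) := by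
  obtain ⟨rm, rp, hc, hemb⟩ : ∃ rm rp : ℝ → ℝ, ControlFns rm rp ∧ ∀ p : G × X × X,
      rm (dist p.2.1 p.2.2) ≤ dist (f (p.1 * g p.2.1)) (f (p.1 * g p.2.2)) ∧
        dist (f (p.1 * g p.2.1)) (f (p.1 * g p.2.2)) ≤ rp (dist p.2.1 p.2.2) := by
    refine exists_controlFns_of_controls (fun _ => dist_nonneg) (fun r => ?_) (fun r => ?_)
    · obtain ⟨N, hN⟩ := exists_forall_dist_mul_le hed hde (r + 2 * C₀)
      refine ⟨N, fun ⟨γ, x, x'⟩ h => hN _ _ γ ?_⟩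
      linarith [show dist x x' ≤ r from h, abs_le.1 (abs_dist_sub_dist_le_of_dist_le hg x x')]
    · obtain ⟨N, hN⟩ := exists_forall_dist_mul_le hed hde r
      refine ⟨N + 2 * C₀, fun ⟨γ, x, x'⟩ h => ?_⟩
      have := hN _ _ γ⁻¹ h
      rw [inv_mul_cancel_left, inv_mul_cancel_left] at this
      linarith [abs_le.1 (abs_dist_sub_dist_le_of_dist_le hg x x')]
  obtain ⟨N, hN⟩ := exists_forall_dist_mul_le hed hde C₀
  refine ⟨rm, rp, max C₀ N, hc, hC₀.trans (le_max_left _ _), ⟨fun x => ?_, fun γ₁ γ₂ x => ?_⟩,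
    fun γ x x' => hemb (γ, x, x')⟩
  · rw [transferNearAction, one_mul, dist_comm]
    exact (hg x).trans (le_max_left _ _)
  · rw [transferNearAction, transferNearAction, transferNearAction, mul_assoc]
    exact (hN _ _ γ₁ (hg _)).trans (le_max_right _ _)

lemma isProperNearAction_transferNearAction (hSfin : S.Finite) (hSsymm : ∀ s ∈ S, s⁻¹ ∈ S)
    (hSgen : Subgroup.closure S = ⊤)
    (hed : Controls (fun p : G × G => wordDist S p.1 p.2) (fun p => dist (f p.1) (f p.2)))
    (hde : Controls (fun p : G × G => dist (f p.1) (f p.2)) (fun p => wordDist S p.1 p.2))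
    (hg : ∀ x, dist x (f (g x)) ≤ C₀) : IsProperNearAction (transferNearAction f g) := by
  intro R _
  obtain ⟨N, hN⟩ := exists_forall_dist_mul_le hed hde (R + 2 * C₀)
  obtain ⟨W, hW⟩ := hde (N + R + C₀)
  refine ⟨(finite_setOf_wordDist_one_le hSfin hSsymm hSgen W).toFinset.card, fun x y => ?_⟩
  rw [← Set.Finite.encard_eq_coe_toFinset_card]
  refine (Set.encard_le_encard ?_).trans (encard_setOf_wordDist_mul_le (g x) (g y) W)
  rintro γ ⟨z, hz, hγz⟩
  rw [mem_closedBall, dist_comm] at hz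
  have hxz : dist (f (γ * g x)) (f (γ * g z)) ≤ N :=
    hN _ _ γ (by linarith [abs_le.1 (abs_dist_sub_dist_le_of_dist_le hg x z)])
  refine hW (γ * g x, g y) ?_
  calc dist (f (γ * g x)) (f (g y))
      ≤ dist (f (γ * g x)) (f (γ * g z)) + dist (f (γ * g z)) y + dist y (f (g y)) :=
        dist_triangle4 _ _ _ _
    _ ≤ N + R + C₀ := add_le_add (add_le_add hxz (mem_closedBall.1 hγz)) (hg y)

lemma isCoboundedNearAction_transferNearAction (hC₀ : 0 ≤ C₀)
    (hg : ∀ x, dist x (f (g x)) ≤ C₀) : IsCoboundedNearAction (transferNearAction f g) := by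
  refine ⟨f 1, C₀ + 1, by linarith, fun y => ⟨g y * (g (f 1))⁻¹, ?_⟩⟩
  rw [transferNearAction, inv_mul_cancel_right, dist_comm]
  linarith [hg y]

theorem IsCoarseEquivPair.exists_coarseNearAction (hSfin : S.Finite)
    (hSsymm : ∀ s ∈ S, s⁻¹ ∈ S) (hSgen : Subgroup.closure S = ⊤)
    (hf : IsCoarseEquivPair (wordDist S) dist f) :
    ∃ (rm rp : ℝ → ℝ) (C : ℝ) (ψ : G → X → X),
      IsCoarseNearAction rm rp C ψ ∧ IsProperNearAction ψ ∧ IsCoboundedNearAction ψ := by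
  obtain ⟨⟨rm, rp, hc, hemb⟩, C₀, hC₀, hsurj⟩ := hf
  choose g hg using hsurj
  obtain ⟨hed, hde⟩ := hc.controls (u := fun p : G × G => wordDist S p.1 p.2)
    (v := fun p => dist (f p.1) (f p.2)) (fun _ => wordDist_nonneg S _ _) fun p => hemb p.1 p.2
  obtain ⟨rm', rp', C, hψ⟩ := isCoarseNearAction_transferNearAction hed hde hC₀ hg
  exact ⟨rm', rp', C, _, hψ, isProperNearAction_transferNearAction hSfin hSsymm hSgen hed hde hg,
    isCoboundedNearAction_transferNearAction hC₀ hg⟩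

end Transfer

theorem stmt12_general {G X : Type*} [Group G] [MetricSpace X]
    (S : Set G) (hSfin : S.Finite) (hSsymm : ∀ s ∈ S, s⁻¹ ∈ S)
    (hSgen : Subgroup.closure S = ⊤) :
    (∃ (rm rp : ℝ → ℝ) (C : ℝ) (ψ : G → X → X),
        IsCoarseNearAction rm rp C ψ ∧ IsProperNearAction ψ ∧
          IsCoboundedNearAction ψ) ↔
      ∃ f : G → X, IsCoarseEquivPair (wordDist S) dist f :=
  ⟨fun ⟨_, _, _, _, hψ, hproper, hcob⟩ =>
      hψ.exists_isCoarseEquivPair hproper hcob hSfin hSsymm hSgen,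
    fun ⟨_, hf⟩ => hf.exists_coarseNearAction hSfin hSsymm hSgen⟩

/-- Generalized Švarc–Milnor with converse: a coarsely connected metric space `X`
admits a proper cobounded coarse near-action by a finitely generated group `G`
if and only if `X` is coarsely equivalent to `G` with its word metric. -/
theorem stmt12 {G X : Type*} [Group G] [MetricSpace X]
    (hX : IsCoarselyConnected X)
    (S : Set G) (hSfin : S.Finite) (hSsymm : ∀ s ∈ S, s⁻¹ ∈ S)
    (hSgen : Subgroup.closure S = ⊤) :
    (∃ (rm rp : ℝ → ℝ) (C : ℝ) (ψ : G → X → X),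
        IsCoarseNearAction rm rp C ψ ∧ IsProperNearAction ψ ∧
          IsCoboundedNearAction ψ) ↔
      ∃ f : G → X, IsCoarseEquivPair (wordDist S) dist f :=
  stmt12_general S hSfin hSsymm hSgen
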